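/- The proof system K⊞ is sound and strongly complete with respect to the class of serial bimodal frames: for every set Γ of L(⊞)-formulas and every L(⊞)-formula φ, Γ ⊢_{K⊞} φ if and only if every pointed serial bimodal model that satisfies all formulas of Γ also satisfies φ. -/

import Mathlib

/-- Formulas of the language L(⊞): propositional variables, ¬, ∧, and ⊞ (`pbox`). -/
inductive Form : Type
  | var : ℕ → Form
  | neg : Form → Form
  | conj : Form → Form → Form
  | pbox : Form → Form

namespace Form
/-- Implication, defined as usual. -/
def imp (φ ψ : Form) : Form := neg (conj φ (neg ψ))
/-- Disjunction, defined as usual. -/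
def disj (φ ψ : Form) : Form := neg (conj (neg φ) (neg ψ))
/-- Biconditional, defined as usual. -/
def biff (φ ψ : Form) : Form := conj (imp φ ψ) (imp ψ φ)
end Form

/-- A bimodal model: a nonempty set of worlds, two accessibility relations and a valuation. -/
structure BiModel : Type 1 where
  S : Type
  ne : Nonempty S
  R1 : S → S → Prop
  R2 : S → S → Prop
  V : ℕ → Set S

/-- Truth of a formula at a world: ⊞φ holds at s iff either φ holds at all
R1-successors of s, or ¬φ holds at all R2-successors of s. -/
def sat (M : BiModel) : M.S → Form → Prop
  | s, .var n => s ∈ M.V n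
  | s, .neg φ => ¬ sat M s φ
  | s, .conj φ ψ => sat M s φ ∧ sat M s ψ
  | s, .pbox φ => (∀ t, M.R1 s t → sat M t φ) ∨ (∀ u, M.R2 s u → ¬ sat M u φ)

/-- Boolean evaluation treating ⊞-formulas as atoms (for defining tautologies). -/
def beval (v : Form → Bool) : Form → Bool
  | .var n => v (.var n)
  | .neg φ => !beval v φ
  | .conj φ ψ => beval v φ && beval v ψ
  | .pbox φ => v (.pbox φ)

/-- φ is an instance of a propositional tautology. -/
def Form.isTaut (φ : Form) : Prop := ∀ v : Form → Bool, beval v φ = true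

/-- Theorems of the minimal system K⊞: propositional tautologies, CON⊞, DIS⊞,
closed under modus ponens, RN⊞ and RE⊞. -/
inductive KPThm : Form → Prop
  | taut {φ : Form} : φ.isTaut → KPThm φ
  | con (φ ψ : Form) :
      KPThm (((Form.pbox φ).conj (Form.pbox ψ)).imp
        ((Form.pbox (φ.conj ψ)).conj (Form.pbox (φ.disj ψ))))
  | dis (φ ψ χ : Form) :
      KPThm ((Form.pbox φ).imp
        ((Form.pbox (φ.disj ψ)).disj (Form.pbox (φ.conj χ))))
  | mp {φ ψ : Form} : KPThm (φ.imp ψ) → KPThm φ → KPThm ψ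
  | rn {φ : Form} : KPThm φ → KPThm ((Form.pbox φ).conj (Form.pbox (Form.neg φ)))
  | re {φ ψ : Form} : KPThm (φ.biff ψ) → KPThm ((Form.pbox φ).biff (Form.pbox ψ))

/-- Γ ⊢_{K⊞} φ: φ is derivable from theorems of K⊞ together with premises in Γ
using modus ponens. -/
inductive PDeriv (Γ : Set Form) : Form → Prop
  | thm {φ : Form} : KPThm φ → PDeriv Γ φ
  | prem {φ : Form} : φ ∈ Γ → PDeriv Γ φ
  | mp {φ ψ : Form} : PDeriv Γ (φ.imp ψ) → PDeriv Γ φ → PDeriv Γ ψ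

/-- A model is serial if both relations are serial. -/
def SerialM (M : BiModel) : Prop := (∀ s, ∃ t, M.R1 s t) ∧ (∀ s, ∃ t, M.R2 s t)

/-!
Soundness is an induction on derivations. For completeness we use the canonical model of maximal
consistent sets. At a world `Δ` let `λ = {φ | ⊞φ ∈ Δ}`. By DIS⊞ every `φ ∈ λ` lies in the filter
`A = {φ | φ ∨ ψ ∈ λ for all ψ}` or in the ideal `B = {φ | φ ∧ χ ∈ λ for all χ}`; CON⊞, RN⊞ and RE⊞
make `A` closed under conjunction and provable consequence, and `B` under disjunction and provable
antecedents. Taking as `R1`-successors the maximal consistent sets containing `A` and as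
`R2`-successors those disjoint from `B`, Lindenbaum's lemma gives `⊞φ ∈ Δ` iff `φ ∈ A` or `φ ∈ B`
iff `φ` holds at every `R1`-successor or fails at every `R2`-successor. The same argument shows that
`A` is consistent and that `B` omits `⊤` unless `λ` contains every formula, so the frame is serial.
-/

namespace Form

def bot : Form := (var 0).conj (var 0).neg

def top : Form := bot.neg

end Form

section Boolean

variable (v : Form → Bool) (φ ψ : Form)

@[simp, grind =] lemma beval_neg : beval v φ.neg = !beval v φ := rfl

@[simp, grind =] lemma beval_conj : beval v (φ.conj ψ) = (beval v φ && beval v ψ) := rfl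

@[simp, grind =] lemma beval_imp : beval v (φ.imp ψ) = (!beval v φ || beval v ψ) := by
  simp [Form.imp]

@[simp, grind =] lemma beval_disj : beval v (φ.disj ψ) = (beval v φ || beval v ψ) := by
  simp [Form.disj]

@[simp, grind =] lemma beval_biff :
    beval v (φ.biff ψ) = ((!beval v φ || beval v ψ) && (!beval v ψ || beval v φ)) := by
  simp [Form.biff]

@[simp, grind =] lemma beval_bot : beval v Form.bot = false := by simp [Form.bot, beval]

@[simp, grind =] lemma beval_top : beval v Form.top = true := by simp [Form.top]

end Boolean

namespace PDeriv

variable {Γ Δ : Set Form} {φ ψ : Form}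

lemma taut (h : φ.isTaut) : PDeriv Γ φ := thm (.taut h)

lemma mono (h : PDeriv Γ φ) (hΓΔ : Γ ⊆ Δ) : PDeriv Δ φ := by
  induction h with
  | thm h => exact thm h
  | prem h => exact prem (hΓΔ h)
  | mp _ _ ih₁ ih₂ => exact mp ih₁ ih₂

lemma deduction (h : PDeriv (insert φ Γ) ψ) : PDeriv Γ (φ.imp ψ) := by
  induction h with
  | thm h => exact mp (taut fun v => by grind) (thm h)
  | prem h =>
    rcases Set.mem_insert_iff.mp h with rfl | h
    · exact taut fun v => by grind
    · exact mp (taut fun v => by grind) (prem h)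
  | mp _ _ ih₁ ih₂ => exact mp (mp (taut fun v => by grind) ih₁) ih₂

lemma kpThm_of_empty (h : PDeriv ∅ φ) : KPThm φ := by
  induction h with
  | thm h => exact h
  | prem h => exact absurd h (Set.notMem_empty _)
  | mp _ _ ih₁ ih₂ => exact KPThm.mp ih₁ ih₂

lemma exists_mem_of_sUnion {c : Set (Set Form)} (hc : IsChain (· ⊆ ·) c) (hne : c.Nonempty)
    (h : PDeriv (⋃₀ c) φ) : ∃ Γ ∈ c, PDeriv Γ φ := by
  induction h with
  | thm h => exact hne.imp fun Γ hΓ => ⟨hΓ, thm h⟩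
  | prem h =>
    obtain ⟨Γ, hΓ, hφ⟩ := h
    exact ⟨Γ, hΓ, prem hφ⟩
  | mp _ _ ih₁ ih₂ =>
    obtain ⟨Γ₁, hΓ₁, h₁⟩ := ih₁
    obtain ⟨Γ₂, hΓ₂, h₂⟩ := ih₂
    rcases hc.total hΓ₁ hΓ₂ with h | h
    · exact ⟨Γ₂, hΓ₂, mp (h₁.mono h) h₂⟩
    · exact ⟨Γ₁, hΓ₁, mp h₁ (h₂.mono h)⟩

end PDeriv

def Consistent (Γ : Set Form) : Prop := ¬PDeriv Γ Form.bot

lemma consistent_insert_neg {Γ : Set Form} {φ : Form} (h : ¬PDeriv Γ φ) :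
    Consistent (insert φ.neg Γ) :=
  fun hbot => h (.mp (.taut fun v => by grind) hbot.deduction)

lemma Consistent.exists_maximal_superset {Γ : Set Form} (h : Consistent Γ) :
    ∃ Δ, Γ ⊆ Δ ∧ Maximal Consistent Δ := by
  refine zorn_subset_nonempty {Γ | Consistent Γ} (fun c hc hchain hne => ?_) Γ h
  refine ⟨⋃₀ c, fun hbot => ?_, fun _ => Set.subset_sUnion_of_mem⟩
  obtain ⟨Γ', hΓ', hbot'⟩ := hbot.exists_mem_of_sUnion hchain hne
  exact hc hΓ' hbot'

namespace Maximal

variable {Δ : Set Form} (hΔ : Maximal Consistent Δ) {φ ψ : Form}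
include hΔ

lemma mem_of_pderiv (h : PDeriv Δ φ) : φ ∈ Δ :=
  hΔ.mem_of_prop_insert fun hbot => hΔ.prop (.mp hbot.deduction h)

lemma mem_of_kpThm (h : KPThm φ) : φ ∈ Δ := hΔ.mem_of_pderiv (.thm h)

lemma neg_mem_iff : φ.neg ∈ Δ ↔ φ ∉ Δ := by
  refine ⟨fun hneg hφ => hΔ.prop ?_, fun hφ => hΔ.mem_of_pderiv ?_⟩
  · exact .mp (.mp (.taut fun v => by grind) (.prem hφ)) (.prem hneg)
  · have hbot : PDeriv (insert φ Δ) Form.bot :=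
      not_not.mp fun hcons => hφ (hΔ.mem_of_prop_insert hcons)
    exact .mp (.taut fun v => by grind) hbot.deduction

lemma conj_mem_iff : φ.conj ψ ∈ Δ ↔ φ ∈ Δ ∧ ψ ∈ Δ :=
  ⟨fun h => ⟨hΔ.mem_of_pderiv (.mp (.taut fun v => by grind) (.prem h)),
      hΔ.mem_of_pderiv (.mp (.taut fun v => by grind) (.prem h))⟩,
    fun ⟨hφ, hψ⟩ => hΔ.mem_of_pderiv (.mp (.mp (.taut fun v => by grind) (.prem hφ)) (.prem hψ))⟩

lemma imp_mem_iff : φ.imp ψ ∈ Δ ↔ (φ ∈ Δ → ψ ∈ Δ) := by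
  simp only [Form.imp, hΔ.neg_mem_iff, hΔ.conj_mem_iff]
  tauto

lemma disj_mem_iff : φ.disj ψ ∈ Δ ↔ φ ∈ Δ ∨ ψ ∈ Δ := by
  simp only [Form.disj, hΔ.neg_mem_iff, hΔ.conj_mem_iff]
  tauto

lemma mem_iff_of_kpThm_biff (h : KPThm (φ.biff ψ)) : φ ∈ Δ ↔ ψ ∈ Δ := by
  have hbiff := hΔ.mem_of_kpThm h
  simp only [Form.biff, hΔ.conj_mem_iff, hΔ.imp_mem_iff] at hbiff
  exact ⟨hbiff.1, hbiff.2⟩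

lemma disjoint_of_neg_image_subset {S : Set Form} (h : Form.neg '' S ⊆ Δ) : Disjoint S Δ :=
  Set.disjoint_left.mpr fun _ hφ => hΔ.neg_mem_iff.mp (h (Set.mem_image_of_mem _ hφ))

end Maximal

section Soundness

variable {M : BiModel} {s : M.S} {φ ψ : Form}

lemma sat_neg : sat M s φ.neg ↔ ¬sat M s φ := Iff.rfl

lemma sat_conj : sat M s (φ.conj ψ) ↔ sat M s φ ∧ sat M s ψ := Iff.rfl

lemma sat_pbox :
    sat M s φ.pbox ↔ (∀ t, M.R1 s t → sat M t φ) ∨ (∀ u, M.R2 s u → ¬sat M u φ) := Iff.rfl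

lemma sat_imp : sat M s (φ.imp ψ) ↔ (sat M s φ → sat M s ψ) := by
  simp [Form.imp, sat_neg, sat_conj]

lemma sat_disj : sat M s (φ.disj ψ) ↔ sat M s φ ∨ sat M s ψ := by
  simp only [Form.disj, sat_neg, sat_conj]
  tauto

lemma sat_biff : sat M s (φ.biff ψ) ↔ (sat M s φ ↔ sat M s ψ) := by
  simp only [Form.biff, sat_imp, sat_conj]
  tauto

open Classical in
lemma beval_decide_sat (M : BiModel) (s : M.S) (φ : Form) :
    beval (fun χ => decide (sat M s χ)) φ = decide (sat M s φ) := by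
  induction φ with
  | var n => rfl
  | neg φ ih => simp [ih, sat_neg]
  | conj φ ψ ih₁ ih₂ => simp [ih₁, ih₂, sat_conj]
  | pbox φ => rfl

lemma sat_of_isTaut (h : φ.isTaut) : sat M s φ := by
  classical
  simpa [beval_decide_sat] using h fun χ => decide (sat M s χ)

lemma KPThm.sound (h : KPThm φ) (M : BiModel) (s : M.S) : sat M s φ := by
  induction h generalizing s with
  | taut h => exact sat_of_isTaut h
  | con φ ψ =>
    simp only [sat_imp, sat_disj, sat_conj, sat_pbox]
    grind
  | dis φ ψ χ =>
    simp only [sat_imp, sat_disj, sat_conj, sat_pbox]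
    grind
  | mp _ _ ih₁ ih₂ => exact sat_imp.mp (ih₁ s) (ih₂ s)
  | rn _ ih => exact ⟨.inl fun t _ => ih t, .inr fun u _ hu => hu (ih u)⟩
  | re _ ih =>
    simp only [sat_biff, sat_pbox] at ih ⊢
    simp only [ih]

lemma PDeriv.sound {Γ : Set Form} (h : PDeriv Γ φ) (hΓ : ∀ γ ∈ Γ, sat M s γ) : sat M s φ := by
  induction h with
  | thm h => exact h.sound M s
  | prem h => exact hΓ _ h
  | mp _ _ ih₁ ih₂ => exact sat_imp.mp ih₁ ih₂

end Soundness

lemma consistent_empty : Consistent ∅ := fun h => by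
  simpa [Form.bot, sat_conj, sat_neg] using
    h.kpThm_of_empty.sound ⟨Unit, ⟨()⟩, fun _ _ => True, fun _ _ => True, fun _ => ∅⟩ ()

section BoxSets

def boxSet (Δ : Set Form) : Set Form := {φ | φ.pbox ∈ Δ}

def boxFilter (Δ : Set Form) : Set Form := {φ | φ ∈ boxSet Δ ∧ ∀ ψ, φ.disj ψ ∈ boxSet Δ}

def boxIdeal (Δ : Set Form) : Set Form := {φ | φ ∈ boxSet Δ ∧ ∀ χ, φ.conj χ ∈ boxSet Δ}

variable {Δ : Set Form} (hΔ : Maximal Consistent Δ) {φ ψ : Form}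
include hΔ

lemma mem_boxSet_iff_of_kpThm_biff (h : KPThm (φ.biff ψ)) : φ ∈ boxSet Δ ↔ ψ ∈ boxSet Δ :=
  hΔ.mem_iff_of_kpThm_biff h.re

lemma mem_boxSet_of_kpThm (h : KPThm φ) : φ ∈ boxSet Δ :=
  (hΔ.conj_mem_iff.mp (hΔ.mem_of_kpThm h.rn)).1

lemma mem_boxSet_of_kpThm_neg (h : KPThm φ.neg) : φ ∈ boxSet Δ :=
  (mem_boxSet_iff_of_kpThm_biff hΔ (.taut fun v => by grind)).mp
    (hΔ.conj_mem_iff.mp (hΔ.mem_of_kpThm h.rn)).2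

lemma conj_mem_boxSet_and_disj_mem_boxSet (hφ : φ ∈ boxSet Δ) (hψ : ψ ∈ boxSet Δ) :
    φ.conj ψ ∈ boxSet Δ ∧ φ.disj ψ ∈ boxSet Δ :=
  hΔ.conj_mem_iff.mp <|
    hΔ.imp_mem_iff.mp (hΔ.mem_of_kpThm (.con φ ψ)) (hΔ.conj_mem_iff.mpr ⟨hφ, hψ⟩)

lemma mem_boxSet_iff : φ ∈ boxSet Δ ↔ φ ∈ boxFilter Δ ∨ φ ∈ boxIdeal Δ := by
  refine ⟨fun hφ => ?_, by rintro (h | h) <;> exact h.1⟩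
  by_contra! h
  obtain ⟨ψ, hψ⟩ : ∃ ψ, φ.disj ψ ∉ boxSet Δ := by simpa [boxFilter, hφ] using h.1
  obtain ⟨χ, hχ⟩ : ∃ χ, φ.conj χ ∉ boxSet Δ := by simpa [boxIdeal, hφ] using h.2
  have hdis := hΔ.disj_mem_iff.mp (hΔ.imp_mem_iff.mp (hΔ.mem_of_kpThm (.dis φ ψ χ)) hφ)
  tauto

lemma top_mem_boxFilter : Form.top ∈ boxFilter Δ :=
  ⟨mem_boxSet_of_kpThm hΔ (.taut fun v => by grind),
    fun _ => mem_boxSet_of_kpThm hΔ (.taut fun v => by grind)⟩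

lemma conj_mem_boxFilter (hφ : φ ∈ boxFilter Δ) (hψ : ψ ∈ boxFilter Δ) :
    φ.conj ψ ∈ boxFilter Δ :=
  ⟨(conj_mem_boxSet_and_disj_mem_boxSet hΔ hφ.1 hψ.1).1, fun χ =>
    (mem_boxSet_iff_of_kpThm_biff hΔ (.taut fun v => by grind)).mpr
      (conj_mem_boxSet_and_disj_mem_boxSet hΔ (hφ.2 χ) (hψ.2 χ)).1⟩

lemma mem_boxFilter_of_kpThm_imp (h : KPThm (φ.imp ψ)) (hφ : φ ∈ boxFilter Δ) :
    ψ ∈ boxFilter Δ :=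
  ⟨(mem_boxSet_iff_of_kpThm_biff hΔ (.mp (.taut fun v => by grind) h)).mp (hφ.2 ψ), fun χ =>
    (mem_boxSet_iff_of_kpThm_biff hΔ (.mp (.taut fun v => by grind) h)).mp (hφ.2 (ψ.disj χ))⟩

lemma mem_boxFilter_of_pderiv (h : PDeriv (boxFilter Δ) φ) : φ ∈ boxFilter Δ := by
  induction h with
  | thm h =>
    exact mem_boxFilter_of_kpThm_imp hΔ (.mp (.taut fun v => by grind) h) (top_mem_boxFilter hΔ)
  | prem h => exact h
  | mp _ _ ih₁ ih₂ =>
    exact mem_boxFilter_of_kpThm_imp hΔ (.taut fun v => by grind) (conj_mem_boxFilter hΔ ih₁ ih₂)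

lemma bot_mem_boxIdeal : Form.bot ∈ boxIdeal Δ :=
  ⟨mem_boxSet_of_kpThm_neg hΔ (.taut fun v => by grind),
    fun _ => mem_boxSet_of_kpThm_neg hΔ (.taut fun v => by grind)⟩

lemma disj_mem_boxIdeal (hφ : φ ∈ boxIdeal Δ) (hψ : ψ ∈ boxIdeal Δ) : φ.disj ψ ∈ boxIdeal Δ :=
  ⟨(conj_mem_boxSet_and_disj_mem_boxSet hΔ hφ.1 hψ.1).2, fun χ =>
    (mem_boxSet_iff_of_kpThm_biff hΔ (.taut fun v => by grind)).mpr
      (conj_mem_boxSet_and_disj_mem_boxSet hΔ (hφ.2 χ) (hψ.2 χ)).2⟩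

lemma mem_boxIdeal_of_kpThm_imp (h : KPThm (φ.imp ψ)) (hψ : ψ ∈ boxIdeal Δ) :
    φ ∈ boxIdeal Δ :=
  ⟨(mem_boxSet_iff_of_kpThm_biff hΔ (.mp (.taut fun v => by grind) h)).mp (hψ.2 φ), fun χ =>
    (mem_boxSet_iff_of_kpThm_biff hΔ (.mp (.taut fun v => by grind) h)).mp (hψ.2 (φ.conj χ))⟩

lemma neg_mem_boxIdeal_of_pderiv (h : PDeriv (Form.neg '' boxIdeal Δ) φ) :
    φ.neg ∈ boxIdeal Δ := by
  induction h with
  | thm h =>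
    exact mem_boxIdeal_of_kpThm_imp hΔ (.mp (.taut fun v => by grind) h) (bot_mem_boxIdeal hΔ)
  | prem h =>
    obtain ⟨ψ, hψ, rfl⟩ := h
    exact mem_boxIdeal_of_kpThm_imp hΔ (.taut fun v => by grind) hψ
  | mp _ _ ih₁ ih₂ =>
    exact mem_boxIdeal_of_kpThm_imp hΔ (.taut fun v => by grind) (disj_mem_boxIdeal hΔ ih₁ ih₂)

lemma consistent_insert_neg_image_boxIdeal (h : φ ∉ boxIdeal Δ) :
    Consistent (insert φ (Form.neg '' boxIdeal Δ)) := fun hbot =>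
  h <| mem_boxIdeal_of_kpThm_imp hΔ (.taut fun v => by grind)
    (neg_mem_boxIdeal_of_pderiv hΔ hbot.deduction)

lemma consistent_boxFilter (hne : boxSet Δ ≠ Set.univ) : Consistent (boxFilter Δ) := fun hbot =>
  hne <| Set.eq_univ_of_forall fun ψ =>
    (mem_boxSet_iff_of_kpThm_biff hΔ (.taut fun v => by grind)).mp
      ((mem_boxFilter_of_pderiv hΔ hbot).2 ψ)

lemma consistent_neg_image_boxIdeal (hne : boxSet Δ ≠ Set.univ) :
    Consistent (Form.neg '' boxIdeal Δ) := fun hbot =>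
  hne <| Set.eq_univ_of_forall fun χ =>
    (mem_boxSet_iff_of_kpThm_biff hΔ (.taut fun v => by grind)).mp
      ((neg_mem_boxIdeal_of_pderiv hΔ hbot).2 χ)

end BoxSets

section CanonicalModel

abbrev CanonicalWorld : Type := {Δ : Set Form // Maximal Consistent Δ}

/- If every formula is boxed at `Δ`, then `⊞φ ∈ Δ` for all `φ`, whatever the successors of `Δ` are,
so a reflexive loop keeps the frame serial. -/
open Classical in
def canonicalR1 (Δ Θ : CanonicalWorld) : Prop :=
  if boxSet Δ.1 = Set.univ then Θ = Δ else boxFilter Δ.1 ⊆ Θ.1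

open Classical in
def canonicalR2 (Δ Θ : CanonicalWorld) : Prop :=
  if boxSet Δ.1 = Set.univ then Θ = Δ else Disjoint (boxIdeal Δ.1) Θ.1

def canonicalModel : BiModel where
  S := CanonicalWorld
  ne := (consistent_empty.exists_maximal_superset).elim fun Δ hΔ => ⟨⟨Δ, hΔ.2⟩⟩
  R1 := canonicalR1
  R2 := canonicalR2
  V n := {Δ | Form.var n ∈ Δ.1}

lemma exists_canonicalR1 (Δ : CanonicalWorld) : ∃ Θ, canonicalR1 Δ Θ := by
  by_cases hu : boxSet Δ.1 = Set.univ
  · exact ⟨Δ, by simp [canonicalR1, hu]⟩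
  · obtain ⟨Θ, hsub, hΘ⟩ := (consistent_boxFilter Δ.2 hu).exists_maximal_superset
    exact ⟨⟨Θ, hΘ⟩, by simpa [canonicalR1, hu] using hsub⟩

lemma exists_canonicalR2 (Δ : CanonicalWorld) : ∃ Θ, canonicalR2 Δ Θ := by
  by_cases hu : boxSet Δ.1 = Set.univ
  · exact ⟨Δ, by simp [canonicalR2, hu]⟩
  · obtain ⟨Θ, hsub, hΘ⟩ :=
      (consistent_neg_image_boxIdeal Δ.2 hu).exists_maximal_superset
    exact ⟨⟨Θ, hΘ⟩, by simpa [canonicalR2, hu] using hΘ.disjoint_of_neg_image_subset hsub⟩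

lemma serialM_canonicalModel : SerialM canonicalModel := ⟨exists_canonicalR1, exists_canonicalR2⟩

variable {Δ : CanonicalWorld} {φ : Form}

lemma forall_canonicalR1_mem_iff (hu : boxSet Δ.1 ≠ Set.univ) :
    (∀ Θ, canonicalR1 Δ Θ → φ ∈ Θ.1) ↔ φ ∈ boxFilter Δ.1 := by
  simp only [canonicalR1, if_neg hu]
  refine ⟨fun h => ?_, fun hφ Θ hΘ => hΘ hφ⟩
  by_contra hφ
  obtain ⟨Θ, hsub, hΘ⟩ :=
    (consistent_insert_neg (mt (mem_boxFilter_of_pderiv Δ.2) hφ)).exists_maximal_superset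
  exact hΘ.neg_mem_iff.mp (hsub (Set.mem_insert _ _))
    (h ⟨Θ, hΘ⟩ ((Set.subset_insert _ _).trans hsub))

lemma forall_canonicalR2_not_mem_iff (hu : boxSet Δ.1 ≠ Set.univ) :
    (∀ Θ, canonicalR2 Δ Θ → φ ∉ Θ.1) ↔ φ ∈ boxIdeal Δ.1 := by
  simp only [canonicalR2, if_neg hu]
  refine ⟨fun h => ?_, fun hφ Θ hΘ => Set.disjoint_left.mp hΘ hφ⟩
  by_contra hφ
  obtain ⟨Θ, hsub, hΘ⟩ :=
    (consistent_insert_neg_image_boxIdeal Δ.2 hφ).exists_maximal_superset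
  exact h ⟨Θ, hΘ⟩ (hΘ.disjoint_of_neg_image_subset ((Set.subset_insert _ _).trans hsub))
    (hsub (Set.mem_insert _ _))

lemma pbox_mem_iff_canonical :
    φ.pbox ∈ Δ.1 ↔ (∀ Θ, canonicalR1 Δ Θ → φ ∈ Θ.1) ∨ (∀ Θ, canonicalR2 Δ Θ → φ ∉ Θ.1) := by
  by_cases hu : boxSet Δ.1 = Set.univ
  · simp only [canonicalR1, canonicalR2, if_pos hu, forall_eq]
    exact ⟨fun _ => em _, fun _ => show φ ∈ boxSet Δ.1 by simp [hu]⟩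
  · rw [forall_canonicalR1_mem_iff hu, forall_canonicalR2_not_mem_iff hu]
    exact mem_boxSet_iff Δ.2

lemma sat_canonicalModel_iff {Δ : canonicalModel.S} : sat canonicalModel Δ φ ↔ φ ∈ Δ.1 := by
  induction φ generalizing Δ with
  | var n => rfl
  | neg φ ih => rw [sat_neg, ih, Δ.2.neg_mem_iff]
  | conj φ ψ ih₁ ih₂ => rw [sat_conj, ih₁, ih₂, Δ.2.conj_mem_iff]
  | pbox φ ih =>
    simp only [sat_pbox, ih]
    exact pbox_mem_iff_canonical.symm

end CanonicalModel

/-- K⊞ is sound and strongly complete with respect to the class of serial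
bimodal frames. -/
theorem stmt10 (Γ : Set Form) (φ : Form) :
    PDeriv Γ φ ↔
      ∀ (M : BiModel), SerialM M →
        ∀ s : M.S, (∀ γ ∈ Γ, sat M s γ) → sat M s φ := by
  refine ⟨fun h _ _ _ => h.sound, fun h => ?_⟩
  by_contra hφ
  obtain ⟨Δ, hsub, hΔ⟩ := (consistent_insert_neg hφ).exists_maximal_superset
  have hsat := h canonicalModel serialM_canonicalModel ⟨Δ, hΔ⟩ fun γ hγ =>
    sat_canonicalModel_iff.mpr (hsub (Set.mem_insert_of_mem _ hγ))
  exact hΔ.neg_mem_iff.mp (hsub (Set.mem_insert _ _)) (sat_canonicalModel_iff.mp hsat)
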